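/- Let n ≥ 1 and let f : ℝⁿ → ℝ be continuously differentiable. Then there is a constant C depending only on n such that for every x ∈ ℝⁿ and every r > 0, the average of |f(z) − f(x)| over the ball B(x, r) is at most C · r · M_r(|∇f|)(x), where M_r(|∇f|)(x) = sup over 0 < t ≤ r of the average of |∇f| over B(x, t). -/

import Mathlib

/-!
Along the segment from `x` to `z`, `|f z - f x| ≤ |z - x| ∫₀¹ |∇f (x + t (z - x))| dt`.
Average over `z ∈ B(x, r)` and exchange the two integrals. For fixed `t`, the homothety
`z ↦ x + t (z - x)` maps `B(x, r)` onto `B(x, t r)` and preserves averages, so the inner average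
is the average of `|∇f|` over `B(x, t r)`, which is at most `M_r |∇f| (x)`. Hence `C = 1` works.
-/

open MeasureTheory Metric Set Pointwise

theorem Continuous.integrableOn_ball {α β : Type*} [MetricSpace α] [ProperSpace α]
    [MeasurableSpace α] [OpensMeasurableSpace α] [NormedAddCommGroup β] {μ : Measure α}
    [IsFiniteMeasureOnCompacts μ] {g : α → β} (hg : Continuous g) (x : α) (r : ℝ) :
    IntegrableOn g (ball x r) μ :=
  (hg.continuousOn.integrableOn_compact (isCompact_closedBall x r)).mono_set ball_subset_closedBall

variable {E F : Type*} [NormedAddCommGroup E] [NormedAddCommGroup F] [NormedSpace ℝ F]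

theorem norm_setAverage_le_of_norm_le_const {α : Type*} [MeasurableSpace α] {μ : Measure α}
    {s : Set α} {g : α → F} {C : ℝ} (hC₀ : 0 ≤ C) (hC : ∀ x ∈ s, ‖g x‖ ≤ C) :
    ‖⨍ x in s, g x ∂μ‖ ≤ C := by
  rcases eq_top_or_lt_top (μ s) with hs | hs
  · simp [setAverage_eq, measureReal_def, hs, hC₀]
  rw [setAverage_eq, norm_smul, norm_inv, Real.norm_of_nonneg measureReal_nonneg]
  rcases (measureReal_nonneg (μ := μ) (s := s)).eq_or_lt with h0 | hpos
  · simp [← h0, hC₀]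
  rw [inv_mul_le_iff₀ hpos]
  simpa [mul_comm] using norm_setIntegral_le_of_norm_le_const hs hC

/-- `M_δ g (z) = localMaximalFunction μ (|g ·|) δ z`. Being a real `⨆`, it is `0` on an unbounded
family of averages, so lower bounds on it need `g` bounded near `z`. -/
noncomputable def localMaximalFunction {α : Type*} [PseudoMetricSpace α] [MeasurableSpace α]
    (μ : Measure α) (g : α → ℝ) (δ : ℝ) (z : α) : ℝ :=
  ⨆ t ∈ Ioc (0 : ℝ) δ, ⨍ w in ball z t, g w ∂μ

theorem setAverage_ball_le_localMaximalFunction {α : Type*} [PseudoMetricSpace α]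
    [ProperSpace α] [MeasurableSpace α] (μ : Measure α) {g : α → ℝ} {δ t : ℝ} {z : α}
    (hg : ContinuousOn g (closedBall z δ)) (ht : t ∈ Ioc 0 δ) :
    ⨍ w in ball z t, g w ∂μ ≤ localMaximalFunction μ g δ z := by
  obtain ⟨C, hC⟩ := (isCompact_closedBall z δ).exists_bound_of_continuousOn hg
  have hbound : ∀ s ∈ Ioc 0 δ, ⨍ w in ball z s, g w ∂μ ≤ max C 0 := fun s hs =>
    (le_abs_self _).trans <| norm_setAverage_le_of_norm_le_const (le_max_right C 0)
      fun w hw => (hC w (ball_subset_closedBall.trans (closedBall_subset_closedBall hs.2) hw)).trans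
        (le_max_left C 0)
  refine le_ciSup₂ (f := fun s (_ : s ∈ Ioc 0 δ) => ⨍ w in ball z s, g w ∂μ) ⟨max C 0, ?_⟩ t ht
  rintro _ ⟨_, ⟨s, rfl⟩, ⟨hs, rfl⟩⟩
  exact hbound s hs

theorem norm_sub_le_mul_intervalIntegral_norm_fderiv [NormedSpace ℝ E] [CompleteSpace F]
    {f : E → F} (hf : ContDiff ℝ 1 f) (x z : E) :
    ‖f z - f x‖ ≤ ‖z - x‖ * ∫ t in (0 : ℝ)..1, ‖fderiv ℝ f (x + t • (z - x))‖ := by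
  set γ : ℝ → E := fun t => x + t • (z - x)
  have hγ : ∀ t, HasDerivAt γ (z - x) t := fun t => by
    simpa [γ] using ((hasDerivAt_id t).smul_const (z - x)).const_add x
  have hf' : Continuous (fderiv ℝ f) := hf.continuous_fderiv one_ne_zero
  have hγc : Continuous γ := by fun_prop
  have hderiv : Continuous fun t => fderiv ℝ f (γ t) (z - x) := by fun_prop
  have hftc : ∫ t in (0 : ℝ)..1, fderiv ℝ f (γ t) (z - x) = f z - f x := by
    rw [intervalIntegral.integral_eq_sub_of_hasDerivAt
      (fun t _ => ((hf.differentiable one_ne_zero) (γ t)).hasFDerivAt.comp_hasDerivAt t (hγ t))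
      (hderiv.intervalIntegrable 0 1)]
    simp [γ]
  calc ‖f z - f x‖ = ‖∫ t in (0 : ℝ)..1, fderiv ℝ f (γ t) (z - x)‖ := by rw [hftc]
    _ ≤ ∫ t in (0 : ℝ)..1, ‖fderiv ℝ f (γ t) (z - x)‖ :=
      intervalIntegral.norm_integral_le_integral_norm zero_le_one
    _ ≤ ∫ t in (0 : ℝ)..1, ‖z - x‖ * ‖fderiv ℝ f (γ t)‖ := by
      refine intervalIntegral.integral_mono_on zero_le_one (hderiv.norm.intervalIntegrable 0 1)
        ((hf'.comp hγc).norm.const_mul _ |>.intervalIntegrable 0 1) fun t _ => ?_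
      rw [mul_comm]
      exact (fderiv ℝ f (γ t)).le_opNorm (z - x)
    _ = ‖z - x‖ * ∫ t in (0 : ℝ)..1, ‖fderiv ℝ f (γ t)‖ :=
      intervalIntegral.integral_const_mul _ _

theorem setIntegral_ball_zero_comp_add [MeasurableSpace E] [BorelSpace E] (μ : Measure E)
    [μ.IsAddLeftInvariant] (g : E → F) (x : E) (r : ℝ) :
    ∫ u in ball 0 r, g (x + u) ∂μ = ∫ z in ball x r, g z ∂μ := by
  have hball : ball (0 : E) r = (x + ·) ⁻¹' ball x r := by simp [preimage_add_ball]
  rw [hball]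
  exact (measurePreserving_add_left μ x).setIntegral_preimage_emb
    (measurableEmbedding_addLeft x) g _

section Haar

variable [NormedSpace ℝ E] [MeasurableSpace E] [BorelSpace E] [FiniteDimensional ℝ E]
  (μ : Measure E) [μ.IsAddHaarMeasure]

theorem setAverage_ball_comp_homothety (g : E → F) (x : E) {t : ℝ} (ht : 0 < t) (r : ℝ) :
    ⨍ z in ball x r, g (x + t • (z - x)) ∂μ = ⨍ w in ball x (t * r), g w ∂μ := by
  have hintegral : ∫ z in ball x r, g (x + t • (z - x)) ∂μ
      = (t ^ Module.finrank ℝ E)⁻¹ • ∫ w in ball x (t * r), g w ∂μ := by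
    have hball : ball (0 : E) (t * r) = t • ball 0 r := by
      rw [_root_.smul_ball ht.ne', smul_zero, Real.norm_of_nonneg ht.le]
    rw [← setIntegral_ball_zero_comp_add μ _ x r, ← setIntegral_ball_zero_comp_add μ g x, hball,
      ← Measure.setIntegral_comp_smul_of_pos μ (fun u => g (x + u)) _ ht]
    simp
  have hmeasure : μ.real (ball x (t * r)) = t ^ Module.finrank ℝ E * μ.real (ball x r) := by
    simp only [measureReal_def, Measure.addHaar_ball_mul_of_pos μ x ht,
      Measure.addHaar_ball_center μ x, ENNReal.toReal_mul,
      ENNReal.toReal_ofReal (pow_nonneg ht.le _)]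
  rw [setAverage_eq, setAverage_eq, hintegral, hmeasure, smul_smul, mul_inv, mul_comm]

theorem setIntegral_ball_intervalIntegral_comp_homothety_le {g : E → ℝ} (hg : Continuous g)
    (x : E) {r : ℝ} (hr : 0 < r) :
    ∫ z in ball x r, (∫ t in (0 : ℝ)..1, g (x + t • (z - x))) ∂μ
      ≤ μ.real (ball x r) * localMaximalFunction μ g r x := by
  set G : ℝ → E → ℝ := fun t z => g (x + t • (z - x))
  have hG : Continuous (Function.uncurry G) := hg.comp (by fun_prop)
  have hGint : Integrable (Function.uncurry G)
      ((volume.restrict (uIoc 0 1)).prod (μ.restrict (ball x r))) := by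
    rw [Measure.prod_restrict]
    exact (hG.continuousOn.integrableOn_compact (isCompact_Icc.prod (isCompact_closedBall x r)))
      |>.mono_set (prod_mono (by rw [uIoc_of_le zero_le_one]; exact Ioc_subset_Icc_self)
        ball_subset_closedBall)
  have hslice : ∀ t ∈ Ioo (0 : ℝ) 1,
      ∫ z in ball x r, G t z ∂μ ≤ μ.real (ball x r) * localMaximalFunction μ g r x := by
    intro t ht
    rw [← measure_smul_setAverage _ measure_ball_lt_top.ne, smul_eq_mul,
      setAverage_ball_comp_homothety μ g x ht.1 r]
    exact mul_le_mul_of_nonneg_left (setAverage_ball_le_localMaximalFunction μ hg.continuousOn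
      ⟨mul_pos ht.1 hr, mul_le_of_le_one_left hr.le ht.2.le⟩) measureReal_nonneg
  rw [← intervalIntegral_integral_swap hGint]
  calc ∫ t in (0 : ℝ)..1, ∫ z in ball x r, G t z ∂μ
      ≤ ∫ t in (0 : ℝ)..1, μ.real (ball x r) * localMaximalFunction μ g r x :=
        intervalIntegral.integral_mono_on_of_le_Ioo zero_le_one
          (intervalIntegrable_iff.2 hGint.integral_prod_left)
          intervalIntegrable_const hslice
    _ = μ.real (ball x r) * localMaximalFunction μ g r x := by simp

theorem setAverage_ball_norm_sub_le_mul_localMaximalFunction [CompleteSpace F] {f : E → F}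
    (hf : ContDiff ℝ 1 f) (x : E) {r : ℝ} (hr : 0 < r) :
    ⨍ z in ball x r, ‖f z - f x‖ ∂μ
      ≤ r * localMaximalFunction μ (fun w => ‖fderiv ℝ f w‖) r x := by
  set g : E → ℝ := fun w => ‖fderiv ℝ f w‖
  have hg : Continuous g := (hf.continuous_fderiv one_ne_zero).norm
  set H : E → ℝ := fun z => ∫ t in (0 : ℝ)..1, g (x + t • (z - x))
  have hH : Continuous H :=
    intervalIntegral.continuous_parametric_intervalIntegral_of_continuous'
      (f := fun z t => g (x + t • (z - x))) (hg.comp (by fun_prop)) 0 1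
  have hpointwise : ∀ z ∈ ball x r, ‖f z - f x‖ ≤ r * H z := fun z hz =>
    (norm_sub_le_mul_intervalIntegral_norm_fderiv hf x z).trans <|
      mul_le_mul_of_nonneg_right (mem_ball_iff_norm.mp hz).le
        (intervalIntegral.integral_nonneg zero_le_one fun _ _ => norm_nonneg _)
  have hintegral : ∫ z in ball x r, ‖f z - f x‖ ∂μ
      ≤ r * (μ.real (ball x r) * localMaximalFunction μ g r x) :=
    calc ∫ z in ball x r, ‖f z - f x‖ ∂μ ≤ ∫ z in ball x r, r * H z ∂μ :=
          setIntegral_mono_on ((hf.continuous.sub continuous_const).norm.integrableOn_ball x r)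
            ((continuous_const.mul hH).integrableOn_ball x r) measurableSet_ball hpointwise
      _ = r * ∫ z in ball x r, H z ∂μ := integral_const_mul r _
      _ ≤ r * (μ.real (ball x r) * localMaximalFunction μ g r x) :=
          mul_le_mul_of_nonneg_left
            (setIntegral_ball_intervalIntegral_comp_homothety_le μ hg x hr) hr.le
  have hvol : 0 < μ.real (ball x r) :=
    ENNReal.toReal_pos (measure_ball_pos μ x hr).ne' measure_ball_lt_top.ne
  rw [setAverage_eq, smul_eq_mul, inv_mul_le_iff₀ hvol]
  linarith

end Haar

theorem stmt3_general (n : ℕ) (f : EuclideanSpace ℝ (Fin n) → ℝ)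
    (hf : ContDiff ℝ 1 f) :
    ∃ C : ℝ, ∀ x : EuclideanSpace ℝ (Fin n), ∀ r : ℝ, 0 < r →
      (⨍ z in ball x r, |f z - f x| ∂volume) ≤
        C * r * ⨆ t ∈ Set.Ioc (0 : ℝ) r, ⨍ w in ball x t, ‖gradient f w‖ ∂volume := by
  have hgradient : (fun w => ‖gradient f w‖) = fun w => ‖fderiv ℝ f w‖ := by
    ext w; simp [gradient]
  refine ⟨1, fun x r hr => ?_⟩
  rw [one_mul]
  exact (setAverage_ball_norm_sub_le_mul_localMaximalFunction volume hf x hr).trans_eq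
    (by rw [localMaximalFunction, hgradient])

/-- For `f : ℝⁿ → ℝ` continuously differentiable there is `C = C(n)` such
that for every `x` and `r > 0`,
`⨍_{B(x,r)} |f z - f x| dz ≤ C * r * M_r(|∇f|)(x)`, where
`M_r g z = ⨆ (0 < t ≤ r), ⨍_{B(z,t)} |g|`. -/
theorem stmt3 (n : ℕ) (hn : 1 ≤ n) (f : EuclideanSpace ℝ (Fin n) → ℝ)
    (hf : ContDiff ℝ 1 f) :
    ∃ C : ℝ, ∀ x : EuclideanSpace ℝ (Fin n), ∀ r : ℝ, 0 < r →
      (⨍ z in ball x r, |f z - f x| ∂volume) ≤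
        C * r * ⨆ t ∈ Set.Ioc (0 : ℝ) r, ⨍ w in ball x t, ‖gradient f w‖ ∂volume :=
  stmt3_general n f hf
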